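/- arXiv:1711.11533 — 5 statements merged into one kernel-verified Lean document; each statement's English description precedes it below -/
import Mathlib

section
/- Let p ≥ 2 and d ≥ 1 be integers, and set e_d = p^d - 1. Let α_0, …, α_{d-1} be integers (with indices taken cyclically modulo d). Then ∑_{j=0}^{d-1} α_j p^j ≡ 0 (mod e_d) if and only if there exist integers t_0, …, t_{d-1} (indices cyclic mod d) such that α_j = t_j p - t_{j-1} for all j. -/
/-- Elementary lemma on p-adic expansions with cyclic indices:
`∑ α_j p^j ≡ 0 (mod p^d − 1)` iff `α_j = t_j p − t_{j−1}` for some integers `t_j`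
(indices cyclic modulo `d`). -/
theorem sum_digits_dvd_iff_exists_telescoping
    (p d : ℕ) (hp : 2 ≤ p) (hd : 1 ≤ d) (α : ZMod d → ℤ) :
    ((p : ℤ) ^ d - 1) ∣ (∑ j ∈ Finset.range d, α (j : ZMod d) * (p : ℤ) ^ j) ↔
      ∃ t : ZMod d → ℤ, ∀ j : ZMod d, α j = t j * (p : ℤ) - t (j - 1) := by
  haveI : NeZero d := ⟨by omega⟩
  constructor
  · rintro ⟨k, hk⟩
    set f : ℕ → ℤ := fun m => k * (p:ℤ) ^ (d - 1 - m) -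
      ∑ i ∈ Finset.range (d - 1 - m), α ((m + 1 + i : ℕ) : ZMod d) * (p:ℤ) ^ i with hf
    have claim1 : ∀ m : ℕ, 1 ≤ m → m < d →
        α ((m : ℕ) : ZMod d) = f m * p - f (m - 1) := by
      intro m h1 h2
      have e1 : d - 1 - (m - 1) = (d - 1 - m) + 1 := by omega
      have e2 : m - 1 + 1 = m := by omega
      simp only [hf, e1, e2]
      rw [Finset.sum_range_succ']
      have e4 : ∀ i ∈ Finset.range (d - 1 - m),
          α ((m + (i + 1) : ℕ) : ZMod d) * (p:ℤ) ^ (i + 1)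
            = (α ((m + 1 + i : ℕ) : ZMod d) * (p:ℤ) ^ i) * p := by
        intro i _
        rw [show m + (i + 1) = m + 1 + i by omega]; ring
      rw [Finset.sum_congr rfl e4, ← Finset.sum_mul]
      have e5 : (p:ℤ) ^ (d - 1 - m + 1) = (p:ℤ) ^ (d - 1 - m) * p := by ring
      rw [e5]
      simp
      ring
    have claim2 : α ((0 : ℕ) : ZMod d) = f 0 * p - f (d - 1) := by
      have e1 : d - 1 - (d - 1) = 0 := by omega
      have e2 : d - 1 - 0 = d - 1 := by omega
      simp only [hf, e1, e2]
      have hS : ∑ j ∈ Finset.range d, α (j : ZMod d) * (p : ℤ) ^ j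
          = ((p:ℤ) ^ d - 1) * k := hk
      rw [show Finset.range d = Finset.range ((d - 1) + 1) from by
        rw [Nat.sub_add_cancel hd], Finset.sum_range_succ'] at hS
      have e4 : ∀ i ∈ Finset.range (d - 1),
          α ((i + 1 : ℕ) : ZMod d) * (p:ℤ) ^ (i + 1)
            = (α ((0 + 1 + i : ℕ) : ZMod d) * (p:ℤ) ^ i) * p := by
        intro i _
        rw [show i + 1 = 0 + 1 + i by omega]; ring
      rw [Finset.sum_congr rfl e4, ← Finset.sum_mul] at hS
      simp only [Finset.range_zero, Finset.sum_empty, pow_zero] at *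
      have : (p:ℤ) ^ (d - 1) * p = (p:ℤ) ^ d := by
        rw [← pow_succ, show d - 1 + 1 = d by omega]
      linear_combination hS - k * this
    refine ⟨fun j => f j.val, ?_⟩
    intro j
    show α j = f j.val * (p:ℤ) - f (j - 1).val
    have hjv : ((j.val : ℕ) : ZMod d) = j := by simp [ZMod.natCast_val, ZMod.cast_id]
    by_cases h0 : j.val = 0
    · have hj0 : j = 0 := by rw [← hjv, h0]; simp
      have hsub : (j - 1).val = d - 1 := by
        rw [hj0, zero_sub]
        have : (-1 : ZMod d) = ((d - 1 : ℕ) : ZMod d) := by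
          rw [Nat.cast_sub hd, ZMod.natCast_self, Nat.cast_one, zero_sub]
        rw [this, ZMod.val_cast_of_lt (by omega)]
      rw [hsub, h0, hj0]
      simpa using claim2
    · have h1 : 1 ≤ j.val := by omega
      have h2 : j.val < d := j.val_lt
      have hsub : (j - 1).val = j.val - 1 := by
        have : j - 1 = ((j.val - 1 : ℕ) : ZMod d) := by
          rw [Nat.cast_sub h1, hjv, Nat.cast_one]
        rw [this, ZMod.val_cast_of_lt (by omega)]
      rw [hsub]
      conv_lhs => rw [← hjv]
      exact claim1 j.val h1 h2
  · rintro ⟨t, ht⟩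
    refine ⟨t ((d - 1 : ℕ) : ZMod d), ?_⟩
    have key : ∀ j ∈ Finset.range d,
        α (j : ZMod d) * (p:ℤ) ^ j
          = t ((j : ℕ) : ZMod d) * (p:ℤ) ^ (j + 1) - t (((j : ℕ) : ZMod d) - 1) * (p:ℤ) ^ j := by
      intro j _
      rw [ht ((j : ℕ) : ZMod d)]; ring
    rw [Finset.sum_congr rfl key, Finset.sum_sub_distrib]
    have hrd : Finset.range d = Finset.range ((d - 1) + 1) := by
      rw [Nat.sub_add_cancel hd]
    rw [hrd, Finset.sum_range_succ, Finset.sum_range_succ']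
    have e1 : ∀ i ∈ Finset.range (d - 1),
        t (((i + 1 : ℕ) : ZMod d) - 1) * (p:ℤ) ^ (i + 1)
          = t ((i : ℕ) : ZMod d) * (p:ℤ) ^ (i + 1) := by
      intro i _
      congr 2
      push_cast
      ring
    rw [Finset.sum_congr rfl e1]
    have e2 : (((0 : ℕ) : ZMod d) - 1) = ((d - 1 : ℕ) : ZMod d) := by
      rw [Nat.cast_sub hd, ZMod.natCast_self, Nat.cast_one, Nat.cast_zero]
    rw [e2, show (d - 1) + 1 = d from Nat.sub_add_cancel hd]
    ring
end

section
/- Let p be a prime, n ≥ 1, d ≥ 1, and suppose p ≥ 2n + 5. Let α_0, …, α_{d-1} be integers with each α_j ∈ [-p+1, p+n-2] and not all α_j equal to -p+1, and suppose α_j = t_j p - t_{j-1} for integers t_j (indices cyclic mod d). Then t_j ∈ {0, 1} for all j. -/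
/-- If `p ≥ 2n + 5`, `α_j ∈ [−p+1, p+n−2]` with not all `α_j = −p+1`, and
`α_j = t_j p − t_{j−1}` (indices cyclic mod `d`), then each `t_j ∈ {0, 1}`. -/
theorem telescoping_coeffs_mem_zero_one
    (p n d : ℕ) (hp : p.Prime) (hn : 1 ≤ n) (hd : 1 ≤ d) (hpn : 2 * n + 5 ≤ p)
    (α t : ZMod d → ℤ)
    (hb : ∀ j : ZMod d, -(p : ℤ) + 1 ≤ α j ∧ α j ≤ (p : ℤ) + (n : ℤ) - 2)
    (hne : ∃ j : ZMod d, α j ≠ -(p : ℤ) + 1)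
    (h : ∀ j : ZMod d, α j = t j * (p : ℤ) - t (j - 1)) :
    ∀ j : ZMod d, t j = 0 ∨ t j = 1 := by
  haveI : NeZero d := ⟨by omega⟩
  have hple : (2 * (n : ℤ) + 5) ≤ (p : ℤ) := by exact_mod_cast hpn
  have hn' : (1 : ℤ) ≤ (n : ℤ) := by exact_mod_cast hn
  -- upper bound t j ≤ 1
  have hub : ∀ j, t j ≤ 1 := by
    obtain ⟨x, hx⟩ := Finite.exists_max t
    intro j
    refine le_trans (hx j) ?_
    by_contra hc
    push_neg at hc
    have h1 := (hb x).2
    have h2 := h x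
    have h3 := hx (x - 1)
    nlinarith
  -- lower bound t j ≥ -1
  have hlb : ∀ j, -1 ≤ t j := by
    obtain ⟨x, hx⟩ := Finite.exists_min t
    intro j
    refine le_trans ?_ (hx j)
    by_contra hc
    push_neg at hc
    have h1 := (hb x).1
    have h2 := h x
    have h3 := hx (x - 1)
    nlinarith
  -- no t j = -1
  intro j
  by_contra hc
  push_neg at hc
  have hj : t j = -1 := by have := hub j; have := hlb j; omega
  -- propagate backwards
  have step : ∀ i : ZMod d, t i = -1 → t (i - 1) = -1 := by
    intro i hi
    have h1 := (hb i).1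
    have h2 := h i
    rw [hi] at h2
    have := hub (i - 1); have := hlb (i - 1)
    nlinarith
  have all : ∀ k : ℕ, t (j - (k : ZMod d)) = -1 := by
    intro k
    induction k with
    | zero => simpa using hj
    | succ m ih =>
      have := step _ ih
      have heq : j - ((m : ZMod d) + 1) = j - (m : ZMod d) - 1 := by ring
      rw [show ((m + 1 : ℕ) : ZMod d) = (m : ZMod d) + 1 by push_cast; ring, heq]
      exact this
  have hall : ∀ i : ZMod d, t i = -1 := by
    intro i
    have := all (j - i).val
    rwa [ZMod.natCast_val, ZMod.cast_id, sub_sub_cancel] at this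
  obtain ⟨j₀, hj₀⟩ := hne
  apply hj₀
  rw [h j₀, hall j₀, hall (j₀ - 1)]
  ring
end

section
/- Let p ≥ 2, n ≥ 1, f ≥ 1. Suppose λ^s_j (for 0 ≤ s ≤ n-1, 0 ≤ j ≤ f-1) are integers with λ^s_j - λ^{s+1}_j ∈ [0, p-1] for all 0 ≤ s ≤ n-2 and all j. Suppose ξ^s_j ∈ [0, p-1] are integers, not all equal to p-1 for each fixed s, such that ∑_{j=0}^{f-1} λ^s_{f-j} p^j ≡ ∑_{j=0}^{f-1} ξ^s_j p^j (mod p^f - 1) for each s (lower indices of λ taken mod f, so λ^s_f = λ^s_0). Write λ^s_{f-j} = ξ^s_j + p u^s_j - u^s_{j-1} for integers u^s_j (which exist, with lower index cyclic mod f). Then for all s, j and all k ≥ 1 with s + k ≤ n-1, we have u^s_j - u^{s+k}_j ∈ [0, n-1]. -/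
set_option maxHeartbeats 1000000 in
/-- In the weight-elimination bookkeeping: given `λ^s_j` with `p`-restricted
differences and digits `ξ^s_j ∈ [0, p−1]` (not all `p−1` for fixed `s`) with
`∑_j λ^s_{f−j} p^j ≡ ∑_j ξ^s_j p^j (mod p^f − 1)`, and integers `u^s_j` with
`λ^s_{f−j} = ξ^s_j + p u^s_j − u^s_{j−1}`, we have `u^s_j − u^{s+k}_j ∈ [0, n−1]`
for all `k ≥ 1` with `s + k ≤ n − 1`. -/
theorem carry_differences_bounded
    (p n f : ℕ) (hp : 2 ≤ p) (hn : 1 ≤ n) (hf : 1 ≤ f)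
    (L ξ u : ℕ → ZMod f → ℤ)
    (hL : ∀ s, s + 1 ≤ n - 1 → ∀ j : ZMod f,
      L s j - L (s + 1) j ∈ Set.Icc (0 : ℤ) ((p : ℤ) - 1))
    (hξ : ∀ s, s ≤ n - 1 → ∀ j : ZMod f, ξ s j ∈ Set.Icc (0 : ℤ) ((p : ℤ) - 1))
    (hξne : ∀ s, s ≤ n - 1 → ∃ j : ZMod f, ξ s j ≠ (p : ℤ) - 1)
    (hcong : ∀ s, s ≤ n - 1 →
      ((p : ℤ) ^ f - 1) ∣
        ((∑ j ∈ Finset.range f, L s (-(j : ZMod f)) * (p : ℤ) ^ j) -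
         (∑ j ∈ Finset.range f, ξ s (j : ZMod f) * (p : ℤ) ^ j)))
    (hu : ∀ s, s ≤ n - 1 → ∀ j : ZMod f,
      L s (-j) = ξ s j + (p : ℤ) * u s j - u s (j - 1)) :
    ∀ s k, 1 ≤ k → s + k ≤ n - 1 → ∀ j : ZMod f,
      u s j - u (s + k) j ∈ Set.Icc (0 : ℤ) ((n : ℤ) - 1) := by
  haveI : NeZero f := ⟨by omega⟩
  intro s k hk hsk
  have hs : s ≤ n - 1 := by omega
  -- telescoped bound on L-differences
  have hLk0 : ∀ m : ℕ, s + m ≤ n - 1 → ∀ j : ZMod f,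
      0 ≤ L s j - L (s + m) j ∧ L s j - L (s + m) j ≤ (m : ℤ) * ((p : ℤ) - 1) := by
    intro m
    induction m with
    | zero => intro _ j; simp
    | succ m ih =>
      intro hsm j
      have h1 := ih (by omega) j
      have h2 := hL (s + m) (by omega) j
      simp only [Set.mem_Icc] at h2
      have he : s + m + 1 = s + (m + 1) := by ring
      rw [he] at h2
      push_cast
      constructor <;> nlinarith [h1.1, h1.2, h2.1, h2.2]
  have hLk : ∀ j : ZMod f, 0 ≤ L s j - L (s + k) j ∧
      L s j - L (s + k) j ≤ (k : ℤ) * ((p : ℤ) - 1) := hLk0 k hsk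
  set d : ZMod f → ℤ := fun j => u s j - u (s + k) j with hd
  -- the cyclic relation
  have key : ∀ j : ZMod f, (p : ℤ) * d j - d (j - 1) =
      (L s (-j) - L (s + k) (-j)) - (ξ s j - ξ (s + k) j) := by
    intro j
    have h1 := hu s hs j
    have h2 := hu (s + k) hsk j
    simp only [hd]
    linarith
  -- max and min
  obtain ⟨j0, -, hj0⟩ := Finset.exists_max_image (Finset.univ : Finset (ZMod f)) d
    ⟨0, Finset.mem_univ 0⟩
  obtain ⟨j1, -, hj1⟩ := Finset.exists_min_image (Finset.univ : Finset (ZMod f)) d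
    ⟨0, Finset.mem_univ 0⟩
  simp only [Finset.mem_univ, forall_true_left, true_implies] at hj0 hj1
  have hmax : ∀ j, d j ≤ d j0 := hj0
  have hmin : ∀ j, d j1 ≤ d j := hj1
  have hp1 : (1 : ℤ) ≤ (p : ℤ) - 1 := by
    have : (2 : ℤ) ≤ (p : ℤ) := by exact_mod_cast hp
    linarith
  -- every element of ZMod f is a - i for some natural i
  have hsurj : ∀ (a j : ZMod f), ∃ i : ℕ, j = a - (i : ZMod f) := by
    intro a j
    exact ⟨(a - j).val, by rw [ZMod.natCast_val, ZMod.cast_id]; ring⟩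
  -- M ≤ k + 1
  have hMle : d j0 ≤ (k : ℤ) + 1 := by
    have hkey := key j0
    have hLb := (hLk (-j0)).2
    have hξb1 := (hξ s hs j0); have hξb2 := (hξ (s + k) hsk j0)
    simp only [Set.mem_Icc] at hξb1 hξb2
    have hmx := hmax (j0 - 1)
    nlinarith [hmx, hkey, hLb, hξb1.1, hξb2.2]
  -- M ≤ k
  have hMk : d j0 ≤ (k : ℤ) := by
    by_contra hcon
    have hM : d j0 = (k : ℤ) + 1 := by omega
    have hall : ∀ i : ℕ, d (j0 - (i : ZMod f)) = d j0 := by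
      intro i
      induction i with
      | zero => simp
      | succ m ih =>
        have hkey := key (j0 - (m : ZMod f))
        have hLb := (hLk (-(j0 - (m : ZMod f)))).2
        have hξb1 := hξ s hs (j0 - (m : ZMod f))
        have hξb2 := hξ (s + k) hsk (j0 - (m : ZMod f))
        simp only [Set.mem_Icc] at hξb1 hξb2
        have heq : j0 - (m : ZMod f) - 1 = j0 - ((m + 1 : ℕ) : ZMod f) := by
          push_cast; ring
        rw [ih, heq] at hkey
        have h1 : d j0 ≤ d (j0 - ((m + 1 : ℕ) : ZMod f)) := by
          nlinarith [hkey, hLb, hξb1.1, hξb2.2, hM]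
        have h2 := hmax (j0 - ((m + 1 : ℕ) : ZMod f))
        omega
    have hallj : ∀ j : ZMod f, d j = (k : ℤ) + 1 := by
      intro j
      obtain ⟨i, rfl⟩ := hsurj j0 j
      rw [hall i, hM]
    obtain ⟨j, hjne⟩ := hξne (s + k) hsk
    apply hjne
    have hkey := key j
    have hLb := (hLk (-j)).2
    have hξb1 := hξ s hs j; have hξb2 := hξ (s + k) hsk j
    simp only [Set.mem_Icc] at hξb1 hξb2
    nlinarith [hkey, hLb, hξb1.1, hξb2.2, hallj j, hallj (j - 1)]
  -- m ≥ -1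
  have hmge : (-1 : ℤ) ≤ d j1 := by
    have hkey := key j1
    have hLb := (hLk (-j1)).1
    have hξb1 := hξ s hs j1; have hξb2 := hξ (s + k) hsk j1
    simp only [Set.mem_Icc] at hξb1 hξb2
    have hmn := hmin (j1 - 1)
    nlinarith [hmn, hkey, hLb, hξb1.2, hξb2.1]
  -- m ≥ 0
  have hm0 : (0 : ℤ) ≤ d j1 := by
    by_contra hcon
    have hM : d j1 = -1 := by omega
    have hall : ∀ i : ℕ, d (j1 - (i : ZMod f)) = d j1 := by
      intro i
      induction i with
      | zero => simp
      | succ m ih =>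
        have hkey := key (j1 - (m : ZMod f))
        have hLb := (hLk (-(j1 - (m : ZMod f)))).1
        have hξb1 := hξ s hs (j1 - (m : ZMod f))
        have hξb2 := hξ (s + k) hsk (j1 - (m : ZMod f))
        simp only [Set.mem_Icc] at hξb1 hξb2
        have heq : j1 - (m : ZMod f) - 1 = j1 - ((m + 1 : ℕ) : ZMod f) := by
          push_cast; ring
        rw [ih, heq] at hkey
        have h1 : d (j1 - ((m + 1 : ℕ) : ZMod f)) ≤ d j1 := by
          nlinarith [hkey, hLb, hξb1.2, hξb2.1, hM]
        have h2 := hmin (j1 - ((m + 1 : ℕ) : ZMod f))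
        omega
    have hallj : ∀ j : ZMod f, d j = -1 := by
      intro j
      obtain ⟨i, rfl⟩ := hsurj j1 j
      rw [hall i, hM]
    obtain ⟨j, hjne⟩ := hξne s hs
    apply hjne
    have hkey := key j
    have hLb := (hLk (-j)).1
    have hξb1 := hξ s hs j; have hξb2 := hξ (s + k) hsk j
    simp only [Set.mem_Icc] at hξb1 hξb2
    nlinarith [hkey, hLb, hξb1.2, hξb2.1, hallj j, hallj (j - 1)]
  intro j
  simp only [Set.mem_Icc]
  have hkn : (k : ℤ) ≤ (n : ℤ) - 1 := by
    have : k ≤ n - 1 := by omega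
    omega
  exact ⟨le_trans hm0 (hmin j), le_trans (hmax j) (le_trans hMk hkn)⟩
end

section
/- Let p ≥ 2, n ≥ 1, f ≥ 1, d ≥ 1 an integer with d + n - 1 ≤ (p-1)/2. In the setting of the previous context (λ^s_j with p-restricted differences, and digits ξ^s_j with ∑_j λ^s_{f-j} p^j ≡ ∑_j ξ^s_j p^j mod p^f - 1), suppose additionally that for each fixed j, the multiset {ξ^0_j, …, ξ^{n-1}_j} is (d+n-1)-generic, i.e., ξ^s_j - ξ^{s'}_j mod (p-1) lies in [d+n-1, p-1-(d+n-1)] for all s ≠ s'. Then for all j, all s, and all k ≥ 1 with s+k ≤ n-1, the residue of λ^s_j - λ^{s+k}_j modulo p-1 lies in [d, p-1-d]. -/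
private lemma rot_step (p f : ℕ) (a : ZMod f → ℤ) (t : ZMod f) :
    (p:ℤ) * ∑ j ∈ Finset.range f, a ((j:ZMod f) + (t+1)) * (p:ℤ)^j
      = (∑ j ∈ Finset.range f, a ((j:ZMod f) + t) * (p:ℤ)^j) + a t * ((p:ℤ)^f - 1) := by
  have h1 := Finset.sum_range_succ' (fun j : ℕ => a ((j:ZMod f) + t) * (p:ℤ)^j) f
  have h2 := Finset.sum_range_succ (fun j : ℕ => a ((j:ZMod f) + t) * (p:ℤ)^j) f
  have key : (p:ℤ) * ∑ j ∈ Finset.range f, a ((j:ZMod f) + (t+1)) * (p:ℤ)^j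
      = ∑ j ∈ Finset.range f, a (((j+1:ℕ):ZMod f) + t) * (p:ℤ)^(j+1) := by
    rw [Finset.mul_sum]
    refine Finset.sum_congr rfl fun j _ => ?_
    have h : ((j:ZMod f)) + (t+1) = ((j+1:ℕ):ZMod f) + t := by push_cast; ring
    rw [h]; ring
  rw [key]
  have hf0 : ((f:ℕ):ZMod f) = 0 := ZMod.natCast_self f
  rw [hf0] at h2
  simp only [Nat.cast_zero, zero_add, pow_zero, mul_one] at h1 h2
  linarith [h1, h2]

private lemma rot_dvd (p f : ℕ) (a : ZMod f → ℤ) (m : ℕ) :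
    ((p:ℤ)^f - 1) ∣ (p:ℤ)^m * (∑ j ∈ Finset.range f, a ((j:ZMod f) + (m:ZMod f)) * (p:ℤ)^j)
      - ∑ j ∈ Finset.range f, a (j:ZMod f) * (p:ℤ)^j := by
  induction m with
  | zero => simp
  | succ m ih =>
    obtain ⟨c, hc⟩ := ih
    have h := rot_step p f a (m : ZMod f)
    refine ⟨c + (p:ℤ)^m * a (m:ZMod f), ?_⟩
    have hcast : ((m+1:ℕ) : ZMod f) = (m : ZMod f) + 1 := by push_cast; ring
    rw [hcast]
    linear_combination hc + (p:ℤ)^m * h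

private lemma digit_rel (p f : ℕ) (hp : 2 ≤ p) (hf : 1 ≤ f)
    (a δ : ZMod f → ℤ)
    (ha : ∀ t, 0 ≤ a t ∧ a t ≤ (p:ℤ) - 1)
    (hδ : ∀ t, -((p:ℤ)-1) ≤ δ t ∧ δ t ≤ (p:ℤ)-1)
    (hδtop : ∃ t, δ t ≤ (p:ℤ) - 2)
    (hδbot : ∃ t, -((p:ℤ)-2) ≤ δ t)
    (hdvd : ((p:ℤ)^f - 1) ∣ (∑ j ∈ Finset.range f, a (j:ZMod f) * (p:ℤ)^j)
      - (∑ j ∈ Finset.range f, δ (j:ZMod f) * (p:ℤ)^j)) :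
    ∀ t : ZMod f, ∃ e : ℤ, -1 ≤ e ∧ e ≤ 1 ∧ ((p:ℤ)-1) ∣ a t - δ t - e := by
  obtain ⟨f', rfl⟩ : ∃ f', f = f' + 1 := ⟨f - 1, by omega⟩
  haveI : NeZero (f' + 1) := ⟨by omega⟩
  intro t
  have hp' : (2:ℤ) ≤ (p:ℤ) := by exact_mod_cast hp
  set m := t.val with hm
  have hmt : ((m:ℕ) : ZMod (f'+1)) = t := ZMod.natCast_rightInverse t
  set Sa := ∑ j ∈ Finset.range (f'+1), a ((j:ZMod (f'+1)) + t) * (p:ℤ)^j with hSa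
  set Sδ := ∑ j ∈ Finset.range (f'+1), δ ((j:ZMod (f'+1)) + t) * (p:ℤ)^j with hSδ
  have d1 := rot_dvd p (f'+1) a m
  have d2 := rot_dvd p (f'+1) δ m
  rw [hmt] at d1 d2
  -- divisibility of p^m * (Sa - Sδ)
  have hdvd2 : ((p:ℤ)^(f'+1) - 1) ∣ (p:ℤ)^m * (Sa - Sδ) := by
    have e : (p:ℤ)^m * (Sa - Sδ)
        = ((p:ℤ)^m * Sa - ∑ j ∈ Finset.range (f'+1), a (j:ZMod (f'+1)) * (p:ℤ)^j)
          - ((p:ℤ)^m * Sδ - ∑ j ∈ Finset.range (f'+1), δ (j:ZMod (f'+1)) * (p:ℤ)^j)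
          + ((∑ j ∈ Finset.range (f'+1), a (j:ZMod (f'+1)) * (p:ℤ)^j)
            - (∑ j ∈ Finset.range (f'+1), δ (j:ZMod (f'+1)) * (p:ℤ)^j)) := by ring
    rw [e]
    exact dvd_add (dvd_sub d1 d2) hdvd
  have hcop : IsCoprime ((p:ℤ)^(f'+1) - 1) ((p:ℤ)^m) := by
    have hbase : IsCoprime ((p:ℤ)^(f'+1) - 1) (p:ℤ) := by
      refine ⟨-1, (p:ℤ)^f', ?_⟩
      have h : (p:ℤ)^f' * (p:ℤ) = (p:ℤ)^(f'+1) := by rw [← pow_succ]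
      linarith
    exact hbase.pow_right
  have hdvd3 : ((p:ℤ)^(f'+1) - 1) ∣ (Sa - Sδ) := hcop.dvd_of_dvd_mul_left hdvd2
  -- geometric sum value
  have hG : ∑ j ∈ Finset.range (f'+1), ((p:ℤ)-1) * (p:ℤ)^j = (p:ℤ)^(f'+1) - 1 := by
    have hg := geom_sum_mul (p:ℤ) (f'+1)
    calc ∑ j ∈ Finset.range (f'+1), ((p:ℤ)-1) * (p:ℤ)^j
        = (∑ j ∈ Finset.range (f'+1), (p:ℤ)^j) * ((p:ℤ)-1) := by
          rw [Finset.sum_mul]; exact Finset.sum_congr rfl fun j _ => by ring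
      _ = (p:ℤ)^(f'+1) - 1 := hg
  have hpf : (2:ℤ) ≤ (p:ℤ)^(f'+1) := by
    calc (2:ℤ) ≤ (p:ℤ) := hp'
      _ ≤ (p:ℤ)^(f'+1) := le_self_pow₀ (by linarith) (by omega)
  -- bounds on Sa
  have hSa0 : 0 ≤ Sa := Finset.sum_nonneg fun j _ =>
    mul_nonneg (ha _).1 (by positivity)
  have hSa1 : Sa ≤ (p:ℤ)^(f'+1) - 1 := by
    rw [← hG]
    exact Finset.sum_le_sum fun j _ =>
      mul_le_mul_of_nonneg_right (ha _).2 (by positivity)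
  -- bounds on Sδ
  have surj : ∀ u : ZMod (f'+1), ∃ j ∈ Finset.range (f'+1), (j:ZMod (f'+1)) + t = u := by
    intro u
    refine ⟨(u - t).val, Finset.mem_range.mpr (ZMod.val_lt _), ?_⟩
    rw [ZMod.natCast_rightInverse (u - t)]; ring
  have hSδ1 : Sδ ≤ (p:ℤ)^(f'+1) - 2 := by
    obtain ⟨u, hu⟩ := hδtop
    obtain ⟨j0, hj0mem, hj0⟩ := surj u
    have hlt : Sδ < (p:ℤ)^(f'+1) - 1 := by
      rw [← hG]
      refine Finset.sum_lt_sum (fun j _ => mul_le_mul_of_nonneg_right (hδ _).2 (by positivity))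
        ⟨j0, hj0mem, ?_⟩
      have : δ ((j0:ZMod (f'+1)) + t) < (p:ℤ) - 1 := by rw [hj0]; linarith
      exact mul_lt_mul_of_pos_right this (by positivity)
    linarith
  have hSδ0 : -((p:ℤ)^(f'+1) - 2) ≤ Sδ := by
    obtain ⟨u, hu⟩ := hδbot
    obtain ⟨j0, hj0mem, hj0⟩ := surj u
    have hG' : ∑ j ∈ Finset.range (f'+1), (-((p:ℤ)-1)) * (p:ℤ)^j = -((p:ℤ)^(f'+1) - 1) := by
      rw [← hG, ← Finset.sum_neg_distrib]
      exact Finset.sum_congr rfl fun j _ => by ring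
    have hlt : -((p:ℤ)^(f'+1) - 1) < Sδ := by
      rw [← hG']
      refine Finset.sum_lt_sum (fun j _ => mul_le_mul_of_nonneg_right (hδ _).1 (by positivity))
        ⟨j0, hj0mem, ?_⟩
      have : -((p:ℤ)-1) < δ ((j0:ZMod (f'+1)) + t) := by rw [hj0]; linarith
      exact mul_lt_mul_of_pos_right this (by positivity)
    linarith
  -- Sa - Sδ = κ (p^f - 1), κ ∈ {0,1}
  obtain ⟨κ, hκ⟩ := hdvd3
  have hκ0 : 0 ≤ κ := by
    by_contra h
    push_neg at h
    have h1 : κ ≤ -1 := by omega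
    have : ((p:ℤ)^(f'+1) - 1) * κ ≤ ((p:ℤ)^(f'+1) - 1) * (-1) :=
      mul_le_mul_of_nonneg_left h1 (by linarith)
    linarith
  have hκ1 : κ ≤ 1 := by
    by_contra h
    push_neg at h
    have h1 : 2 ≤ κ := by omega
    have : ((p:ℤ)^(f'+1) - 1) * 2 ≤ ((p:ℤ)^(f'+1) - 1) * κ :=
      mul_le_mul_of_nonneg_left h1 (by linarith)
    linarith
  -- p divides Sa - a t and Sδ - δ t
  have hzero : (((0:ℕ)):ZMod (f'+1)) + t = t := by simp
  have hap : (p:ℤ) ∣ Sa - a t := by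
    have h1 := Finset.sum_range_succ' (fun j : ℕ => a ((j:ZMod (f'+1)) + t) * (p:ℤ)^j) f'
    rw [hSa, h1]
    simp only [Nat.cast_zero, zero_add, pow_zero, mul_one, add_sub_cancel_right]
    exact Finset.dvd_sum fun j _ =>
      dvd_mul_of_dvd_right (dvd_pow_self (p:ℤ) (Nat.succ_ne_zero j)) _
  have hδp : (p:ℤ) ∣ Sδ - δ t := by
    have h1 := Finset.sum_range_succ' (fun j : ℕ => δ ((j:ZMod (f'+1)) + t) * (p:ℤ)^j) f'
    rw [hSδ, h1]
    simp only [Nat.cast_zero, zero_add, pow_zero, mul_one, add_sub_cancel_right]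
    exact Finset.dvd_sum fun j _ =>
      dvd_mul_of_dvd_right (dvd_pow_self (p:ℤ) (Nat.succ_ne_zero j)) _
  have hptot : (p:ℤ) ∣ a t - δ t + κ := by
    have e : a t - δ t + κ = -(Sa - a t) + (Sδ - δ t) + (p:ℤ)^(f'+1) * κ := by
      linear_combination hκ
    rw [e]
    exact dvd_add (dvd_add (dvd_neg.mpr hap) hδp)
      (dvd_mul_of_dvd_left (dvd_pow_self (p:ℤ) (Nat.succ_ne_zero f')) κ)
  obtain ⟨θ, hθ⟩ := hptot
  have hat := ha t
  have hδt := hδ t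
  have hθ0 : 0 ≤ θ := by
    by_contra h
    push_neg at h
    have h1 : θ ≤ -1 := by omega
    have : (p:ℤ) * θ ≤ (p:ℤ) * (-1) := mul_le_mul_of_nonneg_left h1 (by linarith)
    linarith
  have hθ1 : θ ≤ 1 := by
    by_contra h
    push_neg at h
    have h1 : 2 ≤ θ := by omega
    have : (p:ℤ) * 2 ≤ (p:ℤ) * θ := mul_le_mul_of_nonneg_left h1 (by linarith)
    linarith
  refine ⟨θ - κ, by linarith, by linarith, ⟨θ, by linear_combination hθ⟩⟩

/-- Genericity transfer: if for each `j` the digit multiset `{ξ^s_j}_s` is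
`(d+n−1)`-generic, then all differences `λ^s_j − λ^{s+k}_j` have residues mod
`p − 1` in `[d, p−1−d]`. -/
theorem generic_digits_imp_generic_weight
    (p n f d : ℕ) (hp : 2 ≤ p) (hn : 1 ≤ n) (hf : 1 ≤ f) (hd : 1 ≤ d)
    (hdn : 2 * ((d : ℤ) + (n : ℤ) - 1) ≤ (p : ℤ) - 1)
    (L ξ : ℕ → ZMod f → ℤ)
    (hL : ∀ s, s + 1 ≤ n - 1 → ∀ j : ZMod f,
      L s j - L (s + 1) j ∈ Set.Icc (0 : ℤ) ((p : ℤ) - 1))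
    (hξ : ∀ s, s ≤ n - 1 → ∀ j : ZMod f, ξ s j ∈ Set.Icc (0 : ℤ) ((p : ℤ) - 1))
    (hξne : ∀ s, s ≤ n - 1 → ∃ j : ZMod f, ξ s j ≠ (p : ℤ) - 1)
    (hcong : ∀ s, s ≤ n - 1 →
      ((p : ℤ) ^ f - 1) ∣
        ((∑ j ∈ Finset.range f, L s (-(j : ZMod f)) * (p : ℤ) ^ j) -
         (∑ j ∈ Finset.range f, ξ s (j : ZMod f) * (p : ℤ) ^ j)))
    (hgen : ∀ j : ZMod f, ∀ s s', s ≤ n - 1 → s' ≤ n - 1 → s ≠ s' →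
      (d : ℤ) + (n : ℤ) - 1 ≤ (ξ s j - ξ s' j) % ((p : ℤ) - 1) ∧
      (ξ s j - ξ s' j) % ((p : ℤ) - 1) ≤ (p : ℤ) - 1 - ((d : ℤ) + (n : ℤ) - 1)) :
    ∀ (j : ZMod f) (s k : ℕ), 1 ≤ k → s + k ≤ n - 1 →
      (d : ℤ) ≤ (L s j - L (s + k) j) % ((p : ℤ) - 1) ∧
      (L s j - L (s + k) j) % ((p : ℤ) - 1) ≤ (p : ℤ) - 1 - (d : ℤ) := by
  have hp' : (2:ℤ) ≤ (p:ℤ) := by exact_mod_cast hp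
  -- one-step carry relation
  have onestep : ∀ s, s + 1 ≤ n - 1 → ∀ j : ZMod f,
      ∃ e : ℤ, -1 ≤ e ∧ e ≤ 1 ∧
        ((p:ℤ)-1) ∣ (L s j - L (s+1) j) - (ξ s (-j) - ξ (s+1) (-j)) - e := by
    intro s hs j
    have hs0 : s ≤ n - 1 := by omega
    obtain ⟨j1, hj1⟩ := hξne s hs0
    obtain ⟨j2, hj2⟩ := hξne (s+1) hs
    have key := digit_rel p f hp hf
      (fun t => L s (-t) - L (s+1) (-t)) (fun t => ξ s t - ξ (s+1) t)
      (fun t => Set.mem_Icc.mp (hL s hs (-t)))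
      (fun t => by
        have h1 := Set.mem_Icc.mp (hξ s hs0 t)
        have h2 := Set.mem_Icc.mp (hξ (s+1) hs t)
        show -((p:ℤ)-1) ≤ ξ s t - ξ (s+1) t ∧ ξ s t - ξ (s+1) t ≤ (p:ℤ)-1
        exact ⟨by linarith [h1.1, h2.2], by linarith [h1.2, h2.1]⟩)
      ⟨j1, by
        have h1 := Set.mem_Icc.mp (hξ s hs0 j1)
        have h2 := Set.mem_Icc.mp (hξ (s+1) hs j1)
        have : ξ s j1 ≤ (p:ℤ) - 2 := by
          rcases lt_or_eq_of_le h1.2 with h | h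
          · linarith
          · exact absurd h hj1
        show ξ s j1 - ξ (s+1) j1 ≤ (p:ℤ) - 2
        linarith [h2.1]⟩
      ⟨j2, by
        have h1 := Set.mem_Icc.mp (hξ s hs0 j2)
        have h2 := Set.mem_Icc.mp (hξ (s+1) hs j2)
        have : ξ (s+1) j2 ≤ (p:ℤ) - 2 := by
          rcases lt_or_eq_of_le h2.2 with h | h
          · linarith
          · exact absurd h hj2
        show -((p:ℤ)-2) ≤ ξ s j2 - ξ (s+1) j2
        linarith [h1.1]⟩
      (by
        have h := dvd_sub (hcong s hs0) (hcong (s+1) hs)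
        have e : (∑ j ∈ Finset.range f, (L s (-(j:ZMod f)) - L (s+1) (-(j:ZMod f))) * (p:ℤ)^j)
            - (∑ j ∈ Finset.range f, (ξ s (j:ZMod f) - ξ (s+1) (j:ZMod f)) * (p:ℤ)^j)
            = ((∑ j ∈ Finset.range f, L s (-(j:ZMod f)) * (p:ℤ)^j) -
               (∑ j ∈ Finset.range f, ξ s (j:ZMod f) * (p:ℤ)^j))
              - ((∑ j ∈ Finset.range f, L (s+1) (-(j:ZMod f)) * (p:ℤ)^j) -
               (∑ j ∈ Finset.range f, ξ (s+1) (j:ZMod f) * (p:ℤ)^j)) := by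
          simp only [sub_mul, Finset.sum_sub_distrib]
          ring
        rw [e]
        exact h)
    obtain ⟨e, he1, he2, he3⟩ := key (-j)
    refine ⟨e, he1, he2, ?_⟩
    simpa using he3
  -- telescoping
  have tel : ∀ k s, s + k ≤ n - 1 → ∀ j : ZMod f,
      ∃ E : ℤ, -(k:ℤ) ≤ E ∧ E ≤ (k:ℤ) ∧
        ((p:ℤ)-1) ∣ (L s j - L (s+k) j) - (ξ s (-j) - ξ (s+k) (-j)) - E := by
    intro k
    induction k with
    | zero => intro s _ j; exact ⟨0, by simp, by simp, by simp⟩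
    | succ k ih =>
      intro s hs j
      obtain ⟨E, hE1, hE2, hE3⟩ := ih s (by omega) j
      obtain ⟨e, he1, he2, he3⟩ := onestep (s+k) (by omega) j
      refine ⟨E + e, by push_cast; linarith, by push_cast; linarith, ?_⟩
      have e1 : (L s j - L (s+(k+1)) j) - (ξ s (-j) - ξ (s+(k+1)) (-j)) - (E+e)
          = ((L s j - L (s+k) j) - (ξ s (-j) - ξ (s+k) (-j)) - E)
            + ((L (s+k) j - L (s+k+1) j) - (ξ (s+k) (-j) - ξ (s+k+1) (-j)) - e) := by
        rw [show s + (k+1) = s + k + 1 from rfl]; ring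
      rw [e1]
      exact dvd_add hE3 he3
  -- conclusion
  intro j s k hk hsk
  have hd' : (1:ℤ) ≤ (d:ℤ) := by exact_mod_cast hd
  have hn' : (1:ℤ) ≤ (n:ℤ) := by exact_mod_cast hn
  obtain ⟨E, hE1, hE2, hE3⟩ := tel k s hsk j
  have hkn : (k:ℤ) ≤ (n:ℤ) - 1 := by omega
  have hsn : s ≤ n - 1 := by omega
  have hneq : s ≠ s + k := by omega
  obtain ⟨hg1, hg2⟩ := hgen (-j) s (s+k) hsn hsk hneq
  set r := (ξ s (-j) - ξ (s+k) (-j)) % ((p:ℤ)-1) with hr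
  have hdr : ((p:ℤ)-1) ∣ (ξ s (-j) - ξ (s+k) (-j)) - r :=
    ⟨(ξ s (-j) - ξ (s+k) (-j)) / ((p:ℤ)-1), by rw [hr, Int.emod_def]; ring⟩
  have hmain : ((p:ℤ)-1) ∣ (L s j - L (s+k) j) - (r + E) := by
    have e1 : (L s j - L (s+k) j) - (r+E)
        = ((L s j - L (s+k) j) - (ξ s (-j) - ξ (s+k) (-j)) - E)
          + ((ξ s (-j) - ξ (s+k) (-j)) - r) := by ring
    rw [e1]
    exact dvd_add hE3 hdr
  have hlow : (d:ℤ) ≤ r + E := by linarith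
  have hhigh : r + E ≤ (p:ℤ) - 1 - (d:ℤ) := by linarith
  obtain ⟨c, hc⟩ := hmain
  have e2 : L s j - L (s+k) j = (r + E) + ((p:ℤ)-1) * c := by linarith
  rw [e2, Int.add_mul_emod_self_left, Int.emod_eq_of_lt (by linarith) (by linarith)]
  exact ⟨hlow, hhigh⟩
end

section
/- Let p ≥ 2, d ≥ 1, e = p^d - 1. Let s: Z/dZ → {0, …, n-1} and for each index s let ξ^s_0, …, ξ^s_{d-1} ∈ Z (lower index cyclic mod d). Suppose κ_0 = ∑_{t=0}^{d-1} ξ^{s(0)}_t p^t, and for each j let r_j = ∑_{t=0}^{d-1} (ξ^{s(j+1)}_{t-j} - ξ^{s(j)}_{t-j}) p^t + b_j e for integers b_j. Then κ_0 · e + ∑_{j=0}^{d-1} r_j p^{d-j} ≡ e · (∑_{j=0}^{d-1} ξ^{s(d-j)}_j p^j + ∑_{j=0}^{d-1} b_j p^{d-j}) (mod e²). -/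
private lemma btc_shift (d : ℕ) (p : ℤ) (g : ZMod d → ℤ) :
    p * ∑ t ∈ Finset.range d, g (t : ZMod d) * p ^ t =
      (∑ t ∈ Finset.range d, g ((t : ZMod d) - 1) * p ^ t) + g (-1) * (p ^ d - 1) := by
  have h1 : p * ∑ t ∈ Finset.range d, g (t : ZMod d) * p ^ t
      = ∑ t ∈ Finset.range d, g (((t + 1 : ℕ) : ZMod d) - 1) * p ^ (t + 1) := by
    rw [Finset.mul_sum]
    refine Finset.sum_congr rfl fun t _ => ?_
    have : (((t + 1 : ℕ) : ZMod d) - 1) = (t : ZMod d) := by push_cast; ring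
    rw [this]; ring
  rw [h1]
  have h2 := Finset.sum_range_succ' (fun t : ℕ => g ((t : ZMod d) - 1) * p ^ t) d
  have h3 := Finset.sum_range_succ (fun t : ℕ => g ((t : ZMod d) - 1) * p ^ t) d
  have hdz : ((d : ZMod d) - 1) = (-1 : ZMod d) := by simp
  have h0 : (((0 : ℕ) : ZMod d) - 1) = (-1 : ZMod d) := by simp
  have := h2.symm.trans h3
  simp only [hdz, h0, pow_zero, mul_one] at this
  linarith [this]

/-- The telescoping congruence used to compute the inertial character of a
rank-1 Breuil module: with `e = p^d − 1`,
`κ₀ e + ∑_j r_j p^{d−j} ≡ e (∑_j ξ^{s(d−j)}_j p^j + ∑_j b_j p^{d−j}) (mod e²)`. -/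
theorem breuil_telescoping_congruence
    (p d n : ℕ) (hp : 2 ≤ p) (hd : 1 ≤ d) (hn : 1 ≤ n)
    (s : ZMod d → Fin n) (ξ : Fin n → ZMod d → ℤ) (b : ZMod d → ℤ)
    (κ₀ : ℤ) (hκ₀ : κ₀ = ∑ t ∈ Finset.range d, ξ (s 0) (t : ZMod d) * (p : ℤ) ^ t)
    (r : ZMod d → ℤ)
    (hr : ∀ j : ℕ, j < d → r (j : ZMod d) =
      (∑ t ∈ Finset.range d,
        (ξ (s ((j : ZMod d) + 1)) ((t : ZMod d) - (j : ZMod d)) -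
         ξ (s (j : ZMod d)) ((t : ZMod d) - (j : ZMod d))) * (p : ℤ) ^ t) +
      b (j : ZMod d) * ((p : ℤ) ^ d - 1)) :
    (((p : ℤ) ^ d - 1) ^ 2) ∣
      ((κ₀ * ((p : ℤ) ^ d - 1) +
          ∑ j ∈ Finset.range d, r (j : ZMod d) * (p : ℤ) ^ (d - j)) -
        ((p : ℤ) ^ d - 1) *
          ((∑ j ∈ Finset.range d, ξ (s (-(j : ZMod d))) (j : ZMod d) * (p : ℤ) ^ j) +
           (∑ j ∈ Finset.range d, b (j : ZMod d) * (p : ℤ) ^ (d - j)))) := by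
  set e : ℤ := (p : ℤ) ^ d - 1 with he
  -- the telescoping function
  set f : ℕ → ℤ := fun j =>
    (∑ t ∈ Finset.range d, ξ (s (j : ZMod d)) ((t : ZMod d) - (j : ZMod d)) * (p : ℤ) ^ t) *
      (p : ℤ) ^ (d - j) with hf
  -- per-term identity
  have step : ∀ j ∈ Finset.range d,
      r (j : ZMod d) * (p : ℤ) ^ (d - j) =
        (f (j + 1) - f j) + ξ (s ((j : ZMod d) + 1)) (-1 - (j : ZMod d)) * e * (p : ℤ) ^ (d - (j + 1))
          + b (j : ZMod d) * e * (p : ℤ) ^ (d - j) := by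
    intro j hj
    rw [Finset.mem_range] at hj
    rw [hr j hj]
    have hpow : (p : ℤ) ^ (d - j) = (p : ℤ) * (p : ℤ) ^ (d - (j + 1)) := by
      rw [← pow_succ']
      congr 1
      omega
    have hshift := btc_shift d (p : ℤ) (fun t => ξ (s ((j : ZMod d) + 1)) (t - (j : ZMod d)))
    -- B_j * p^{d-j} = f (j+1) + ξ(...)(-1-j) * e * p^{d-(j+1)}
    have hB : (∑ t ∈ Finset.range d,
          ξ (s ((j : ZMod d) + 1)) ((t : ZMod d) - (j : ZMod d)) * (p : ℤ) ^ t) * (p : ℤ) ^ (d - j)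
        = f (j + 1) + ξ (s ((j : ZMod d) + 1)) (-1 - (j : ZMod d)) * e * (p : ℤ) ^ (d - (j + 1)) := by
      rw [hpow]
      have : (∑ t ∈ Finset.range d,
          ξ (s ((j : ZMod d) + 1)) ((t : ZMod d) - (j : ZMod d)) * (p : ℤ) ^ t) * ((p:ℤ) * (p : ℤ) ^ (d - (j+1)))
        = ((p:ℤ) * ∑ t ∈ Finset.range d,
          ξ (s ((j : ZMod d) + 1)) ((t : ZMod d) - (j : ZMod d)) * (p : ℤ) ^ t) * (p : ℤ) ^ (d - (j+1)) := by ring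
      rw [this, hshift, hf]
      simp only []
      have hc1 : (((j+1 : ℕ)) : ZMod d) = (j : ZMod d) + 1 := by push_cast; ring
      rw [hc1]
      have hc2 : ∀ t : ℕ, ((t : ZMod d) - 1 - (j : ZMod d)) = ((t : ZMod d) - ((j : ZMod d) + 1)) := by
        intro t; ring
      simp only [hc2]
      ring
    have hAB : (∑ t ∈ Finset.range d,
        (ξ (s ((j : ZMod d) + 1)) ((t : ZMod d) - (j : ZMod d)) -
         ξ (s (j : ZMod d)) ((t : ZMod d) - (j : ZMod d))) * (p : ℤ) ^ t)
      = (∑ t ∈ Finset.range d,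
          ξ (s ((j : ZMod d) + 1)) ((t : ZMod d) - (j : ZMod d)) * (p : ℤ) ^ t)
        - (∑ t ∈ Finset.range d,
          ξ (s (j : ZMod d)) ((t : ZMod d) - (j : ZMod d)) * (p : ℤ) ^ t) := by
      rw [← Finset.sum_sub_distrib]
      exact Finset.sum_congr rfl fun t _ => by ring
    have hA : f j = (∑ t ∈ Finset.range d,
        ξ (s (j : ZMod d)) ((t : ZMod d) - (j : ZMod d)) * (p : ℤ) ^ t) * (p : ℤ) ^ (d - j) := rfl
    rw [hAB, hA]
    linear_combination hB
  rw [Finset.sum_congr rfl step]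
  rw [Finset.sum_add_distrib, Finset.sum_add_distrib, Finset.sum_range_sub f]
  -- compute f d and f 0
  have hfd : f d = κ₀ := by
    rw [hf]; simp only [Nat.sub_self, pow_zero, mul_one, ZMod.natCast_self, sub_zero, hκ₀]
  have hf0 : f 0 = κ₀ * (p : ℤ) ^ d := by
    rw [hf, hκ₀]; simp
  -- reindex the middle sum
  have hmid : ∑ j ∈ Finset.range d,
      ξ (s ((j : ZMod d) + 1)) (-1 - (j : ZMod d)) * e * (p : ℤ) ^ (d - (j + 1))
      = e * ∑ j ∈ Finset.range d, ξ (s (-(j : ZMod d))) (j : ZMod d) * (p : ℤ) ^ j := by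
    rw [Finset.mul_sum]
    rw [← Finset.sum_range_reflect (fun j => e * (ξ (s (-(j : ZMod d))) (j : ZMod d) * (p : ℤ) ^ j)) d]
    refine Finset.sum_congr rfl fun j hj => ?_
    rw [Finset.mem_range] at hj
    have hcast : ((d - 1 - j : ℕ) : ZMod d) = -1 - (j : ZMod d) := by
      have : (d - 1 - j : ℕ) + (j + 1) = d := by omega
      have h2 : ((d - 1 - j : ℕ) : ZMod d) + ((j : ZMod d) + 1) = 0 := by
        rw [show ((j : ZMod d) + 1) = (((j + 1 : ℕ)) : ZMod d) by push_cast; ring,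
          ← Nat.cast_add, this, ZMod.natCast_self]
      linear_combination h2
    rw [hcast, show (-(-1 - (j : ZMod d))) = (j : ZMod d) + 1 from by ring]
    have hexp : d - 1 - j = d - (j + 1) := by omega
    rw [hexp]
    ring
  rw [hfd, hf0, hmid]
  have hb : ∑ j ∈ Finset.range d, b (j : ZMod d) * e * (p : ℤ) ^ (d - j)
      = e * ∑ j ∈ Finset.range d, b (j : ZMod d) * (p : ℤ) ^ (d - j) := by
    rw [Finset.mul_sum]; exact Finset.sum_congr rfl fun j _ => by ring
  rw [hb]
  have : κ₀ * e + (κ₀ - κ₀ * (p : ℤ) ^ d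
      + e * ∑ j ∈ Finset.range d, ξ (s (-(j : ZMod d))) (j : ZMod d) * (p : ℤ) ^ j
      + e * ∑ j ∈ Finset.range d, b (j : ZMod d) * (p : ℤ) ^ (d - j))
      - e * ((∑ j ∈ Finset.range d, ξ (s (-(j : ZMod d))) (j : ZMod d) * (p : ℤ) ^ j)
        + ∑ j ∈ Finset.range d, b (j : ZMod d) * (p : ℤ) ^ (d - j)) = 0 := by
    rw [he]; ring
  rw [this]
  exact dvd_zero _
end
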